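/- arXiv:1305.4591 — 2 statements merged into one kernel-verified Lean document; each statement's English description precedes it below -/
import Mathlib

section
/- A bit-flip on qubit 2 of the encoded state produces error syndrome 1001 and a phase-flipped data qubit: for every c = (c(0), c(1)) ∈ ℂ² there is a nonzero complex scalar α independent of c such that T(B₂(f(c))) = α · |1001⟩ ⊗ (c(0)|0⟩ − c(1)|1⟩); applying σ_Z to the data qubit then restores the original state. -/
/-!
Write `Q(y) = y₀y₁ + y₀y₃ + y₁y₄ + y₂y₃ + y₂y₄ + y₃y₄` for the common quadratic part of `γ`
and `θ`. Flipping `y₁` changes `Q` by the linear form `y₀ + y₄` modulo 2, so in the coefficient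
`Σ_y (-1)^{θ(y,z) + γ(x, B₂y)}` of `c(x)` in `T(B₂ f(c))(z)` the two copies of `Q` cancel and
the exponent is `x` plus a linear form in `y`. The character sum over `𝔽₂⁵` is `32` when that
form vanishes, i.e. when `z = (1,0,0,1,x)`, and `0` otherwise, so the coefficient is
`32 · (-1)^x` on the syndrome `1001` with data bit `x`.
-/

open scoped BigOperators

noncomputable section

/-- The 5-qubit state space `V₅ = (Fin 5 → Fin 2) → ℂ ≅ ℂ^32` with the standard
Hermitian inner product. -/
abbrev V5 : Type := EuclideanSpace ℂ (Fin 5 → Fin 2)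

/-- The phase exponent `γ(x,y) = x(y₀+y₁+y₂) + y₀y₁ + y₀y₃ + y₁y₄ + y₂y₃ + y₂y₄ + y₃y₄`,
read modulo 2 via `(-1)^·`. -/
def gam (x : Fin 2) (y : Fin 5 → Fin 2) : ℕ :=
  x.val * ((y 0).val + (y 1).val + (y 2).val)
    + (y 0).val * (y 1).val + (y 0).val * (y 3).val + (y 1).val * (y 4).val
    + (y 2).val * (y 3).val + (y 2).val * (y 4).val + (y 3).val * (y 4).val

/-- The graph-code encoding `f : ℂ² → V₅`, `f(c)(y) = Σ_x (−1)^{γ(x,y)} c(x)`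
(normalization factors omitted). -/
def enc (c : Fin 2 → ℂ) : V5 := WithLp.toLp 2 (fun y => ∑ x : Fin 2, (-1 : ℂ) ^ gam x y * c x)

/-- The decoding phase exponent `θ`, with `z = (l₀, l₁, l₃, l₄, x̂)`. -/
def theta (y z : Fin 5 → Fin 2) : ℕ :=
  (z 4).val * ((y 0).val + (y 1).val + (y 2).val)
    + (y 0).val * (y 1).val + (y 0).val * (y 3).val + (y 1).val * (y 4).val
    + (y 2).val * (y 3).val + (y 2).val * (y 4).val + (y 3).val * (y 4).val
    + (y 0).val * (z 0).val + (y 1).val * (z 1).val + (y 3).val * (z 2).val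
    + (y 4).val * (z 3).val

/-- The graph decoding operator `T : V₅ → V₅`,
`T|y⟩ = Σ_{l₀l₁l₃l₄, x̂} (−1)^θ |l₀l₁l₃l₄x̂⟩`. -/
def dec (ψ : V5) : V5 := WithLp.toLp 2 (fun z => ∑ y : Fin 5 → Fin 2, (-1 : ℂ) ^ theta y z * ψ y)

/-- The product state `|s₀s₁s₂s₃⟩ ⊗ (a|0⟩ + b|1⟩)` in `V₅`: four syndrome qubits
followed by one data qubit. -/
def synData (s : Fin 4 → Fin 2) (a b : ℂ) : V5 :=
  WithLp.toLp 2 (fun (y : Fin 5 → Fin 2) => (if y 0 = s 0 ∧ y 1 = s 1 ∧ y 2 = s 2 ∧ y 3 = s 3 then (1 : ℂ) else 0)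
    * (if y 4 = 0 then a else b))

/-- Bit-flip (Pauli `σ_X`) on qubit `i` (0-indexed: qubit `j` of the paper is `i = j - 1`). -/
def bitFlip (i : Fin 5) (ψ : V5) : V5 := WithLp.toLp 2 (fun y => ψ (Function.update y i (1 - y i)))

/-- Phase-flip (Pauli `σ_Z`) on qubit `i` (0-indexed). -/
def phaseFlip (i : Fin 5) (ψ : V5) : V5 := WithLp.toLp 2 (fun y => (-1 : ℂ) ^ (y i).val * ψ y)

theorem sum_neg_one_pow_sum_mul_val {ι R : Type*} [Fintype ι] [DecidableEq ι] [CommRing R]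
    (a : ι → ℕ) :
    ∑ y : ι → Fin 2, (-1 : R) ^ (∑ i, a i * (y i).val) =
      if ∀ i, Even (a i) then 2 ^ Fintype.card ι else 0 := by
  simp_rw [← Finset.prod_pow_eq_pow_sum]
  rw [← Fintype.prod_sum fun i (b : Fin 2) => (-1 : R) ^ (a i * b.val)]
  simp only [Fin.sum_univ_two, Fin.isValue, Fin.val_zero, Fin.val_one, mul_zero, mul_one, pow_zero]
  split_ifs with h
  · simp [(h _).neg_one_pow, one_add_one_eq_two]
  · obtain ⟨i, hi⟩ := not_forall.mp h
    exact Finset.prod_eq_zero (Finset.mem_univ i) (by simp [Nat.not_even_iff_odd.mp hi])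

lemma neg_one_pow_eq_of_natCast_zmod_two_eq {R : Type*} [Monoid R] [HasDistribNeg R] {m n : ℕ}
    (h : (m : ZMod 2) = n) : (-1 : R) ^ m = (-1) ^ n :=
  neg_one_pow_congr (by rw [← ZMod.natCast_eq_zero_iff_even, h, ZMod.natCast_eq_zero_iff_even])

lemma Fin.val_one_sub_cast_zmod_two (b : Fin 2) : (((1 - b).val : ℕ) : ZMod 2) = 1 + b.val := by
  fin_cases b <;> decide

def bitFlipOnePhaseCoeff (x : Fin 2) (z : Fin 5 → Fin 2) : Fin 5 → ℕ :=
  ![(z 4).val + x.val + 1 + (z 0).val, (z 4).val + x.val + (z 1).val, (z 4).val + x.val,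
    (z 2).val, (z 3).val + 1]

lemma theta_add_gam_bitFlip_one_cast_zmod_two (x : Fin 2) (y z : Fin 5 → Fin 2) :
    ((theta y z + gam x (Function.update y 1 (1 - y 1)) : ℕ) : ZMod 2) =
      ((x.val + ∑ i, bitFlipOnePhaseCoeff x z i * (y i).val : ℕ) : ZMod 2) := by
  simp only [theta, gam, bitFlipOnePhaseCoeff, Fin.sum_univ_five, Function.update_apply,
    Fin.reduceEq, ↓reduceIte]
  push_cast
  rw [Fin.val_one_sub_cast_zmod_two]
  -- the two sides differ by twice a polynomial
  ring_nf
  reduce_mod_char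

lemma dec_bitFlip_one_enc_apply (c : Fin 2 → ℂ) (z : Fin 5 → Fin 2) :
    dec (bitFlip 1 (enc c)) z =
      ∑ x : Fin 2,
        (-1) ^ x.val * (if ∀ i, Even (bitFlipOnePhaseCoeff x z i) then 32 else 0) * c x := by
  have hsign (x : Fin 2) (y : Fin 5 → Fin 2) :
      (-1 : ℂ) ^ theta y z * (-1) ^ gam x (Function.update y 1 (1 - y 1)) =
        (-1) ^ x.val * (-1) ^ ∑ i, bitFlipOnePhaseCoeff x z i * (y i).val := by
    rw [← pow_add, ← pow_add]
    exact neg_one_pow_eq_of_natCast_zmod_two_eq (theta_add_gam_bitFlip_one_cast_zmod_two x y z)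
  simp only [dec, bitFlip, enc, PiLp.toLp_apply, Finset.mul_sum]
  rw [Finset.sum_comm]
  refine Finset.sum_congr rfl fun x _ => ?_
  calc ∑ y, (-1) ^ theta y z * ((-1) ^ gam x (Function.update y 1 (1 - y 1)) * c x)
      = ∑ y, (-1) ^ x.val * (-1) ^ (∑ i, bitFlipOnePhaseCoeff x z i * (y i).val) * c x :=
        Finset.sum_congr rfl fun y _ => by rw [← hsign, mul_assoc]
    _ = (-1) ^ x.val *
          (∑ y : Fin 5 → Fin 2, (-1) ^ ∑ i, bitFlipOnePhaseCoeff x z i * (y i).val) * c x := by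
        rw [Finset.mul_sum, Finset.sum_mul]
    _ = _ := by rw [sum_neg_one_pow_sum_mul_val, Fintype.card_fin]; norm_num

lemma forall_even_bitFlipOnePhaseCoeff_iff (x : Fin 2) (z : Fin 5 → Fin 2) :
    (∀ i, Even (bitFlipOnePhaseCoeff x z i)) ↔
      (z 0 = 1 ∧ z 1 = 0 ∧ z 2 = 0 ∧ z 3 = 1) ∧ z 4 = x := by
  revert x z
  decide

/-- A bit-flip on qubit 2 produces syndrome `1001` and a phase-flipped data qubit: `T(B₂ f(c)) = α |1001⟩ ⊗ (c(0)|0⟩ − c(1)|1⟩)` with `α ≠ 0` independent of `c`; applying `σ_Z` to the data qubit restores the original state. -/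
theorem bit_flip_qubit2_syndrome :
    ∃ α : ℂ, α ≠ 0 ∧ ∀ c : Fin 2 → ℂ,
      dec (bitFlip 1 (enc c)) = α • synData ![1, 0, 0, 1] (c 0) (-(c 1)) := by
  refine ⟨32, by norm_num, fun c => ?_⟩
  ext z
  rw [dec_bitFlip_one_enc_apply]
  simp only [forall_even_bitFlipOnePhaseCoeff_iff, Fin.sum_univ_two, synData, PiLp.smul_apply,
    smul_eq_mul]
  obtain h4 | h4 : z 4 = 0 ∨ z 4 = 1 := by omega
  all_goals by_cases hs : z 0 = 1 ∧ z 1 = 0 ∧ z 2 = 0 ∧ z 3 = 1 <;> simp [hs, h4]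
end
end

section
/- The [[5,1,3]] graph code together with the decoder T corrects every single-qubit Pauli error with a distinct syndrome: there exist functions assigning to each error E in the 16-element set {id} ∪ {B_j, S_j, BS_j : j ∈ {1,…,5}} a syndrome string s_E ∈ {0,1}⁴ and a unitary u_E on ℂ², such that (i) for all c ∈ ℂ², T(E(f(c))) is a nonzero scalar multiple (the scalar independent of c) of |s_E⟩ ⊗ u_E(c(0)|0⟩ + c(1)|1⟩), and (ii) the sixteen syndrome strings s_E are pairwise distinct; consequently, measuring the four syndrome qubits identifies the error and applying u_E^{-1} to the data qubit recovers the original one-qubit state. -/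
open scoped BigOperators

noncomputable section

/-- The 16-element error set `{id} ∪ {B_j, S_j, BS_j : j ∈ {1,…,5}}`:
`none` is the identity (no error); `some (j, 0)` is the bit-flip `B_{j+1}`,
`some (j, 1)` the phase-flip `S_{j+1}`, and `some (j, 2)` the combined flip
`BS_{j+1} = S_{j+1} ∘ B_{j+1}`. -/
def applyErr (e : Option (Fin 5 × Fin 3)) (ψ : V5) : V5 :=
  match e with
  | none => ψ
  | some (j, k) =>
      if k = 0 then bitFlip j ψ
      else if k = 1 then phaseFlip j ψ
      else phaseFlip j (bitFlip j ψ)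

/-!
Write `q` for the quadratic form of the graph and `Γ` for its adjacency matrix over `𝔽₂`, so that
`q (y + a) = q y + q a + Γ a ⬝ᵥ y`. Every error is a Pauli operator `Z^b X^a`, and on an encoded
state `X^a` acts as `Z^{Γ a}` up to a sign and a logical Pauli, so the error acts as `Z^r` with
`r = b + Γ a`. The decoder is a Walsh–Hadamard transform twisted by `q`: the twist cancels the `q`
of the encoded state, and orthogonality of the characters of `𝔽₂⁵` leaves a single syndrome, read
off from `r`, with a one-qubit Pauli on the data qubit. The sixteen errors give sixteen distinct
syndromes.
-/

open Finset Matrix Fin.CommRing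

theorem AddChar.map_sum_eq_prod {ι A M : Type*} [AddCommMonoid A] [CommMonoid M]
    (ψ : AddChar A M) (s : Finset ι) (f : ι → A) : ψ (∑ i ∈ s, f i) = ∏ i ∈ s, ψ (f i) := by
  classical
  induction s using Finset.induction_on with
  | empty => simp
  | insert i s hi ih => rw [sum_insert hi, prod_insert hi, AddChar.map_add_eq_mul, ih]

def signChar : AddChar (Fin 2) ℂ where
  toFun t := (-1) ^ t.val
  map_zero_eq_one' := rfl
  map_add_eq_mul' s t := by fin_cases s <;> fin_cases t <;> norm_num

theorem signChar_apply (t : Fin 2) : signChar t = (-1) ^ t.val := rfl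

theorem neg_one_pow_eq_signChar (n : ℕ) : (-1 : ℂ) ^ n = signChar n := by
  rw [signChar_apply, Fin.val_natCast, ← neg_one_pow_eq_pow_mod_two]

theorem signChar_ne_zero (t : Fin 2) : signChar t ≠ 0 := by
  rw [signChar_apply]
  exact pow_ne_zero _ (by norm_num)

theorem sum_signChar_dotProduct {ι : Type*} [Fintype ι] [DecidableEq ι] (a : ι → Fin 2) :
    ∑ y : ι → Fin 2, signChar (a ⬝ᵥ y) = if a = 0 then 2 ^ Fintype.card ι else 0 := by
  have hcoord (t : Fin 2) : ∑ s : Fin 2, signChar (t * s) = if t = 0 then 2 else 0 := by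
    fin_cases t <;> norm_num [Fin.sum_univ_two, signChar_apply]
  simp_rw [dotProduct, AddChar.map_sum_eq_prod]
  rw [← Fintype.prod_sum (κ := fun _ => Fin 2) (fun i t => signChar (a i * t))]
  simp [hcoord, prod_ite_zero, funext_iff]

section Pauli

variable {ι : Type*} [Fintype ι]

/-- The Pauli operator `Z^b X^a` on qubits indexed by `ι`. -/
def pauli (a b : ι → Fin 2) (ψ : EuclideanSpace ℂ (ι → Fin 2)) : EuclideanSpace ℂ (ι → Fin 2) :=
  WithLp.toLp 2 fun y => signChar (b ⬝ᵥ y) * ψ (y + a)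

theorem pauli_zero_zero (ψ : EuclideanSpace ℂ (ι → Fin 2)) : pauli 0 0 ψ = ψ := by
  ext y
  simp [pauli]

theorem pauli_zero_pauli_zero (a b : ι → Fin 2) (ψ : EuclideanSpace ℂ (ι → Fin 2)) :
    pauli 0 b (pauli a 0 ψ) = pauli a b ψ := by
  ext y
  simp [pauli]

end Pauli

theorem bitFlip_eq_pauli (j : Fin 5) (ψ : V5) : bitFlip j ψ = pauli (Pi.single j 1) 0 ψ := by
  have hflip (y : Fin 5 → Fin 2) : Function.update y j (1 - y j) = y + Pi.single j 1 := by
    funext i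
    rcases eq_or_ne i j with rfl | hij
    · simpa using (by decide : ∀ t : Fin 2, 1 - t = t + 1) (y i)
    · simp [hij]
  ext y
  simp [pauli, bitFlip, hflip]

theorem phaseFlip_eq_pauli (j : Fin 5) (ψ : V5) : phaseFlip j ψ = pauli 0 (Pi.single j 1) ψ := by
  ext y
  simp [pauli, phaseFlip, signChar_apply]

def errorX : Option (Fin 5 × Fin 3) → Fin 5 → Fin 2
  | none => 0
  | some (j, k) => if k = 1 then 0 else Pi.single j 1

def errorZ : Option (Fin 5 × Fin 3) → Fin 5 → Fin 2
  | none => 0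
  | some (j, k) => if k = 0 then 0 else Pi.single j 1

theorem applyErr_eq_pauli (e : Option (Fin 5 × Fin 3)) (ψ : V5) :
    applyErr e ψ = pauli (errorX e) (errorZ e) ψ := by
  rcases e with _ | ⟨j, k⟩
  · exact (pauli_zero_zero ψ).symm
  · fin_cases k <;>
      simp [applyErr, errorX, errorZ, bitFlip_eq_pauli, phaseFlip_eq_pauli, pauli_zero_pauli_zero]

/-- The qubits joined to the input vertex of the graph. -/
def inputNbhd : Fin 5 → Fin 2 := ![1, 1, 1, 0, 0]

def graphQuad (y : Fin 5 → Fin 2) : Fin 2 :=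
  y 0 * y 1 + y 0 * y 3 + y 1 * y 4 + y 2 * y 3 + y 2 * y 4 + y 3 * y 4

def graphAdj : Matrix (Fin 5) (Fin 5) (Fin 2) :=
  !![0, 1, 0, 1, 0; 1, 0, 0, 0, 1; 0, 0, 0, 1, 1; 1, 0, 1, 0, 1; 0, 1, 1, 1, 0]

theorem graphQuad_add (y a : Fin 5 → Fin 2) :
    graphQuad (y + a) = graphQuad y + graphQuad a + graphAdj *ᵥ a ⬝ᵥ y := by
  simp [graphQuad, graphAdj, mulVec, dotProduct, Fin.sum_univ_five]
  ring

theorem enc_apply (c : Fin 2 → ℂ) (y : Fin 5 → Fin 2) :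
    enc c y = signChar (graphQuad y) * ∑ x, signChar (x * (inputNbhd ⬝ᵥ y)) * c x := by
  have hgam (x : Fin 2) : (gam x y : Fin 2) = graphQuad y + x * (inputNbhd ⬝ᵥ y) := by
    simp [gam, graphQuad, inputNbhd, dotProduct, Fin.sum_univ_five]
    ring
  simp only [enc, PiLp.toLp_apply, mul_sum, neg_one_pow_eq_signChar, hgam,
    AddChar.map_add_eq_mul, mul_assoc]

def decoderForm (z : Fin 5 → Fin 2) : Fin 5 → Fin 2 := ![z 0 + z 4, z 1 + z 4, z 4, z 2, z 3]

theorem dec_apply (ψ : V5) (z : Fin 5 → Fin 2) :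
    dec ψ z = ∑ y, signChar (graphQuad y + decoderForm z ⬝ᵥ y) * ψ y := by
  have htheta (y : Fin 5 → Fin 2) : (theta y z : Fin 2) = graphQuad y + decoderForm z ⬝ᵥ y := by
    simp [theta, graphQuad, decoderForm, dotProduct, Fin.sum_univ_five]
    ring
  simp only [dec, PiLp.toLp_apply, neg_one_pow_eq_signChar, htheta]

/-- On encoded states `Z^b X^a` acts as `Z^(zEquivalent a b)`, up to a sign and a logical Pauli. -/
def zEquivalent (a b : Fin 5 → Fin 2) : Fin 5 → Fin 2 := b + graphAdj *ᵥ a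

theorem dec_pauli_enc_apply (a b : Fin 5 → Fin 2) (c : Fin 2 → ℂ) (z : Fin 5 → Fin 2) :
    dec (pauli a b (enc c)) z = ∑ x, signChar (graphQuad a + x * (inputNbhd ⬝ᵥ a)) * c x *
      ∑ y, signChar ((decoderForm z + x • inputNbhd + zEquivalent a b) ⬝ᵥ y) := by
  simp only [dec_apply, pauli, enc_apply, mul_sum]
  rw [sum_comm]
  refine sum_congr rfl fun x _ => sum_congr rfl fun y _ => ?_
  have hexp : graphQuad y + decoderForm z ⬝ᵥ y + b ⬝ᵥ y + graphQuad (y + a)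
      + x * (inputNbhd ⬝ᵥ (y + a)) = graphQuad a + x * (inputNbhd ⬝ᵥ a)
      + (decoderForm z + x • inputNbhd + zEquivalent a b) ⬝ᵥ y := by
    simp only [graphQuad_add, zEquivalent, add_dotProduct, dotProduct_add, smul_dotProduct,
      smul_eq_mul]
    linear_combination graphQuad y * (by decide : (2 : Fin 2) = 0)
  have hsign := congrArg signChar hexp
  simp only [AddChar.map_add_eq_mul] at hsign ⊢
  linear_combination c x * hsign

def syndrome (r : Fin 5 → Fin 2) : Fin 4 → Fin 2 := ![r 0 + r 2, r 1 + r 2, r 3, r 4]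

theorem decoderForm_add_eq_zero_iff (z r : Fin 5 → Fin 2) (x : Fin 2) :
    decoderForm z + x • inputNbhd + r = 0 ↔
      (z 0 = syndrome r 0 ∧ z 1 = syndrome r 1 ∧ z 2 = syndrome r 2 ∧ z 3 = syndrome r 3) ∧
        x = z 4 + r 2 := by
  revert z r x
  decide

/-- The one-qubit Pauli operator `Z^γ X^β`. -/
def qubitPauli (β γ : Fin 2) : Matrix (Fin 2) (Fin 2) ℂ :=
  Matrix.of fun i j => if j = i + β then signChar (i * γ) else 0

theorem qubitPauli_mulVec_apply (β γ : Fin 2) (c : Fin 2 → ℂ) (i : Fin 2) :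
    (qubitPauli β γ *ᵥ c) i = signChar (i * γ) * c (i + β) := by
  simp [qubitPauli, mulVec, dotProduct]

theorem qubitPauli_mem_unitaryGroup (β γ : Fin 2) :
    qubitPauli β γ ∈ unitaryGroup (Fin 2) ℂ := by
  rw [mem_unitaryGroup_iff]
  ext i j
  fin_cases β <;> fin_cases γ <;> fin_cases i <;> fin_cases j <;>
    simp [qubitPauli, mul_apply, signChar_apply]

def decodedScalar (a b : Fin 5 → Fin 2) : ℂ :=
  32 * signChar (graphQuad a + zEquivalent a b 2 * (inputNbhd ⬝ᵥ a))

def decodedDataOp (a b : Fin 5 → Fin 2) : Matrix (Fin 2) (Fin 2) ℂ :=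
  qubitPauli (zEquivalent a b 2) (inputNbhd ⬝ᵥ a)

theorem dec_pauli_enc (a b : Fin 5 → Fin 2) (c : Fin 2 → ℂ) :
    dec (pauli a b (enc c)) = decodedScalar a b • synData (syndrome (zEquivalent a b))
      ((decodedDataOp a b *ᵥ c) 0) ((decodedDataOp a b *ᵥ c) 1) := by
  ext z
  rw [dec_pauli_enc_apply]
  have hdata (v : Fin 2 → ℂ) : (if z 4 = 0 then v 0 else v 1) = v (z 4) := by
    rcases Fin.exists_fin_two.mp ⟨z 4, rfl⟩ with h | h <;> simp [h]
  simp only [sum_signChar_dotProduct, decoderForm_add_eq_zero_iff, PiLp.smul_apply, synData,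
    hdata, smul_eq_mul]
  split_ifs with hsyn
  · simp only [and_iff_right hsyn, mul_ite, mul_zero, sum_ite_eq', mem_univ, if_true, one_mul,
      decodedScalar, decodedDataOp, qubitPauli_mulVec_apply, Fintype.card_fin]
    rw [show graphQuad a + (z 4 + zEquivalent a b 2) * (inputNbhd ⬝ᵥ a)
      = graphQuad a + zEquivalent a b 2 * (inputNbhd ⬝ᵥ a) + z 4 * (inputNbhd ⬝ᵥ a) by ring,
      AddChar.map_add_eq_mul]
    ring
  · simp [hsyn]

/-- **Table 1.** The `[[5,1,3]]` graph code with decoder `T` corrects every single-qubit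
Pauli error with a distinct syndrome: there are a syndrome string `s_E ∈ {0,1}⁴` and a
unitary `u_E` on `ℂ²` for each error `E` in the 16-element set
`{id} ∪ {B_j, S_j, BS_j}`, such that the sixteen syndromes are pairwise distinct and for
all `c`, `T(E(f(c)))` is a nonzero scalar multiple (scalar independent of `c`) of
`|s_E⟩ ⊗ u_E(c(0)|0⟩ + c(1)|1⟩)`. Hence measuring the syndrome qubits identifies the
error and applying `u_E⁻¹` to the data qubit recovers the original one-qubit state. -/
theorem table_of_syndromes :
    ∃ (s : Option (Fin 5 × Fin 3) → (Fin 4 → Fin 2))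
      (u : Option (Fin 5 × Fin 3) → Matrix (Fin 2) (Fin 2) ℂ),
      Function.Injective s ∧
      (∀ e, u e ∈ Matrix.unitaryGroup (Fin 2) ℂ) ∧
      ∀ e, ∃ α : ℂ, α ≠ 0 ∧ ∀ c : Fin 2 → ℂ,
        dec (applyErr e (enc c)) =
          α • synData (s e) ((u e).mulVec c 0) ((u e).mulVec c 1) := by
  refine ⟨fun e => syndrome (zEquivalent (errorX e) (errorZ e)),
    fun e => decodedDataOp (errorX e) (errorZ e), by decide,
    fun e => qubitPauli_mem_unitaryGroup _ _, fun e => ⟨decodedScalar (errorX e) (errorZ e),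
      mul_ne_zero (by norm_num) (signChar_ne_zero _), fun c => ?_⟩⟩
  rw [applyErr_eq_pauli, dec_pauli_enc]
end
end
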